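/- arXiv:2409.05239 — 2 statements merged into one kernel-verified Lean document; each statement's English description precedes it below -/
import Mathlib

section
/- Let A ∈ ℝ^{m×n}, b ∈ ℝ^m, and 1 ≤ k. Let x_QR be a minimizer of ‖b − Ax‖₂ over x ∈ K_k(AᵀA, Aᵀb), and let D ∈ ℝ^{m×(k+1)} be a matrix with linearly independent columns whose column space equals K_{k+1}(AAᵀ, b), with Moore–Penrose pseudoinverse D† = (DᵀD)⁻¹Dᵀ. Let x_LU be a minimizer of ‖D†(b − Ax)‖₂ over x ∈ K_k(AᵀA, Aᵀb). Suppose D = Q R̂ where Q ∈ ℝ^{m×(k+1)} has orthonormal columns (QᵀQ = I) and R̂ ∈ ℝ^{(k+1)×(k+1)} is upper triangular and invertible. Then ‖b − A x_QR‖₂ ≤ ‖b − A x_LU‖₂ ≤ κ(R̂) · ‖b − A x_QR‖₂, where κ(R̂) = ‖R̂‖ · ‖R̂⁻¹‖ is the condition number of R̂ in the spectral (ℓ²) operator norm. -/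
open Matrix

noncomputable def vnorm {α : Type*} [Fintype α] (x : α → ℝ) : ℝ :=
  ‖(WithLp.equiv 2 (α → ℝ)).symm x‖

noncomputable def specNorm {α β : Type*} [Fintype α] [Fintype β] [DecidableEq β]
    (M : Matrix α β ℝ) : ℝ :=
  ‖LinearMap.toContinuousLinearMap (Matrix.toEuclideanLin M)‖

noncomputable def pinv {α β : Type*} [Fintype α] [Fintype β] [DecidableEq α] [DecidableEq β]
    (M : Matrix α β ℝ) : Matrix β α ℝ :=
  (Mᵀ * M)⁻¹ * Mᵀ

def krylov {α : Type*} [Fintype α] [DecidableEq α] (M : Matrix α α ℝ) (v : α → ℝ) (k : ℕ) :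
    Submodule ℝ (α → ℝ) :=
  Submodule.span ℝ {w | ∃ i < k, w = (M ^ i).mulVec v}

/-!
Every residual `b - A x` with `x ∈ K_k(AᵀA, Aᵀb)` lies in `K_{k+1}(AAᵀ, b) = range D`, say
`b - A x = D y`, and then `D† (b - A x) = y`. Writing `D = Q R̂` with `Q` an isometry,
`‖b - A x‖ = ‖R̂ y‖`, so LSLU minimises `‖y‖` while LSQR minimises `‖R̂ y‖`; comparing the two
costs `‖R̂‖ ‖R̂⁻¹‖`.
-/

section Norms

variable {α β ι : Type*} [Fintype α] [Fintype β] [Fintype ι]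

lemma vnorm_nonneg (x : α → ℝ) : 0 ≤ vnorm x := norm_nonneg _

lemma vnorm_sq (x : α → ℝ) : vnorm x ^ 2 = x ⬝ᵥ x := by
  rw [vnorm, EuclideanSpace.norm_eq, Real.sq_sqrt (by positivity)]
  simp [dotProduct, sq, WithLp.equiv_symm_apply]

lemma specNorm_nonneg [DecidableEq β] (M : Matrix α β ℝ) : 0 ≤ specNorm M := norm_nonneg _

lemma vnorm_mulVec_le [DecidableEq β] (M : Matrix α β ℝ) (v : β → ℝ) :
    vnorm (M *ᵥ v) ≤ specNorm M * vnorm v := by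
  simpa [vnorm, specNorm, WithLp.equiv_symm_apply] using
    (LinearMap.toContinuousLinearMap (toEuclideanLin M)).le_opNorm
      ((WithLp.equiv 2 (β → ℝ)).symm v)

lemma vnorm_le_specNorm_inv_mul [DecidableEq ι] {R : Matrix ι ι ℝ} (hR : IsUnit R.det)
    (y : ι → ℝ) : vnorm y ≤ specNorm R⁻¹ * vnorm (R *ᵥ y) := by
  simpa [mulVec_mulVec, nonsing_inv_mul _ hR] using vnorm_mulVec_le R⁻¹ (R *ᵥ y)

lemma vnorm_mulVec_of_transpose_mul_self_eq_one [DecidableEq ι] {Q : Matrix α ι ℝ} (hQ : Qᵀ * Q = 1)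
    (z : ι → ℝ) : vnorm (Q *ᵥ z) = vnorm z := by
  have hdot : (Q *ᵥ z) ⬝ᵥ (Q *ᵥ z) = z ⬝ᵥ z := by
    rw [dotProduct_mulVec, ← mulVec_transpose, mulVec_mulVec, hQ, one_mulVec]
  exact (sq_eq_sq₀ (vnorm_nonneg _) (vnorm_nonneg _)).mp (by rw [vnorm_sq, vnorm_sq, hdot])

end Norms

section QR

variable {α ι : Type*} [Fintype α] [Fintype ι] [DecidableEq ι]
  {Q : Matrix α ι ℝ} {R : Matrix ι ι ℝ}

lemma pinv_mul_self_of_eq_mul [DecidableEq α] (hQ : Qᵀ * Q = 1) (hR : IsUnit R.det) :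
    pinv (Q * R) * (Q * R) = 1 := by
  have hGram : (Q * R)ᵀ * (Q * R) = Rᵀ * R := by
    rw [transpose_mul, Matrix.mul_assoc, ← Matrix.mul_assoc Qᵀ, hQ, Matrix.one_mul]
  have hGram_det : IsUnit ((Q * R)ᵀ * (Q * R)).det := by
    rw [hGram, det_mul, det_transpose]
    exact hR.mul hR
  rw [pinv, Matrix.mul_assoc, nonsing_inv_mul _ hGram_det]

lemma pinv_mulVec_mulVec_of_eq_mul [DecidableEq α] (hQ : Qᵀ * Q = 1) (hR : IsUnit R.det) (y : ι → ℝ) :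
    pinv (Q * R) *ᵥ ((Q * R) *ᵥ y) = y := by
  rw [mulVec_mulVec, pinv_mul_self_of_eq_mul hQ hR, one_mulVec]

lemma vnorm_mul_mulVec_le_of_vnorm_le (hQ : Qᵀ * Q = 1) (hR : IsUnit R.det)
    {y y' : ι → ℝ} (h : vnorm y' ≤ vnorm y) :
    vnorm ((Q * R) *ᵥ y') ≤ specNorm R * specNorm R⁻¹ * vnorm ((Q * R) *ᵥ y) := by
  simp only [← mulVec_mulVec, vnorm_mulVec_of_transpose_mul_self_eq_one hQ]
  calc vnorm (R *ᵥ y') ≤ specNorm R * vnorm y' := vnorm_mulVec_le R y'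
    _ ≤ specNorm R * (specNorm R⁻¹ * vnorm (R *ᵥ y)) := by
        gcongr
        · exact specNorm_nonneg R
        · exact h.trans (vnorm_le_specNorm_inv_mul hR y)
    _ = specNorm R * specNorm R⁻¹ * vnorm (R *ᵥ y) := (mul_assoc _ _ _).symm

end QR

section Krylov

variable {α β : Type*} [Fintype α] [Fintype β] [DecidableEq α] [DecidableEq β]

lemma mul_pow_mul_eq_pow_mul {R : Type*} [Semiring R] (A : Matrix α β R) (B : Matrix β α R)
    (i : ℕ) : A * (B * A) ^ i = (A * B) ^ i * A := by
  induction i with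
  | zero => simp
  | succ i ih =>
    rw [pow_succ, pow_succ, ← Matrix.mul_assoc, ih]
    simp only [Matrix.mul_assoc]

lemma mulVec_mem_krylov_mul_transpose (A : Matrix α β ℝ) (b : α → ℝ) {k : ℕ} {x : β → ℝ}
    (hx : x ∈ krylov (Aᵀ * A) (Aᵀ *ᵥ b) k) : A *ᵥ x ∈ krylov (A * Aᵀ) b (k + 1) := by
  refine (Submodule.span_le (p := (krylov (A * Aᵀ) b (k + 1)).comap A.mulVecLin)).mpr ?_ hx
  rintro _ ⟨i, hi, rfl⟩
  refine Submodule.subset_span ⟨i + 1, by omega, ?_⟩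
  rw [mulVecLin_apply, mulVec_mulVec, mulVec_mulVec, mul_pow_mul_eq_pow_mul, Matrix.mul_assoc, pow_succ]

lemma sub_mulVec_mem_krylov (A : Matrix α β ℝ) (b : α → ℝ) {k : ℕ} {x : β → ℝ}
    (hx : x ∈ krylov (Aᵀ * A) (Aᵀ *ᵥ b) k) : b - A *ᵥ x ∈ krylov (A * Aᵀ) b (k + 1) :=
  sub_mem (Submodule.subset_span ⟨0, k.succ_pos, by simp⟩)
    (mulVec_mem_krylov_mul_transpose A b hx)

end Krylov

theorem lslu_residual_bounds_general
    (m n k : ℕ)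
    (A : Matrix (Fin m) (Fin n) ℝ) (b : Fin m → ℝ)
    (D : Matrix (Fin m) (Fin (k + 1)) ℝ)
    (hD_range : LinearMap.range D.mulVecLin = krylov (A * Aᵀ) b (k + 1))
    (Q : Matrix (Fin m) (Fin (k + 1)) ℝ) (R : Matrix (Fin (k + 1)) (Fin (k + 1)) ℝ)
    (hQR : D = Q * R)
    (hQ : Qᵀ * Q = 1)
    (hR_inv : IsUnit R.det)
    (xQR xLU : Fin n → ℝ)
    (hxQR_mem : xQR ∈ krylov (Aᵀ * A) (Aᵀ.mulVec b) k)
    (hxQR_min : ∀ x ∈ krylov (Aᵀ * A) (Aᵀ.mulVec b) k,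
      vnorm (b - A.mulVec xQR) ≤ vnorm (b - A.mulVec x))
    (hxLU_mem : xLU ∈ krylov (Aᵀ * A) (Aᵀ.mulVec b) k)
    (hxLU_min : ∀ x ∈ krylov (Aᵀ * A) (Aᵀ.mulVec b) k,
      vnorm ((pinv D).mulVec (b - A.mulVec xLU)) ≤ vnorm ((pinv D).mulVec (b - A.mulVec x))) :
    vnorm (b - A.mulVec xQR) ≤ vnorm (b - A.mulVec xLU) ∧
      vnorm (b - A.mulVec xLU) ≤ specNorm R * specNorm R⁻¹ * vnorm (b - A.mulVec xQR) := by
  have residual_eq_mulVec : ∀ x ∈ krylov (Aᵀ * A) (Aᵀ *ᵥ b) k, ∃ y, D *ᵥ y = b - A *ᵥ x :=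
    fun _ hx => by simpa [← hD_range] using sub_mulVec_mem_krylov A b hx
  obtain ⟨yQR, hyQR⟩ := residual_eq_mulVec xQR hxQR_mem
  obtain ⟨yLU, hyLU⟩ := residual_eq_mulVec xLU hxLU_mem
  refine ⟨hxQR_min xLU hxLU_mem, ?_⟩
  have hy : vnorm yLU ≤ vnorm yQR := by
    simpa [← hyQR, ← hyLU, hQR, pinv_mulVec_mulVec_of_eq_mul hQ hR_inv] using
      hxLU_min xQR hxQR_mem
  rw [← hyQR, ← hyLU, hQR]
  exact vnorm_mul_mulVec_le_of_vnorm_le hQ hR_inv hy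

/-- Theorem 2.1: the LSQR and LSLU residual norms satisfy
`‖r_k^QR‖ ≤ ‖r_k^LU‖ ≤ κ(R̂) ‖r_k^QR‖`. -/
theorem lslu_residual_bounds
    (m n k : ℕ) (hk : 1 ≤ k)
    (A : Matrix (Fin m) (Fin n) ℝ) (b : Fin m → ℝ)
    (D : Matrix (Fin m) (Fin (k + 1)) ℝ)
    (hD_indep : LinearIndependent ℝ (fun j : Fin (k + 1) => fun i : Fin m => D i j))
    (hD_range : LinearMap.range D.mulVecLin = krylov (A * Aᵀ) b (k + 1))
    (Q : Matrix (Fin m) (Fin (k + 1)) ℝ) (R : Matrix (Fin (k + 1)) (Fin (k + 1)) ℝ)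
    (hQR : D = Q * R)
    (hQ : Qᵀ * Q = 1)
    (hR_tri : ∀ i j : Fin (k + 1), j < i → R i j = 0)
    (hR_inv : IsUnit R.det)
    (xQR xLU : Fin n → ℝ)
    (hxQR_mem : xQR ∈ krylov (Aᵀ * A) (Aᵀ.mulVec b) k)
    (hxQR_min : ∀ x ∈ krylov (Aᵀ * A) (Aᵀ.mulVec b) k,
      vnorm (b - A.mulVec xQR) ≤ vnorm (b - A.mulVec x))
    (hxLU_mem : xLU ∈ krylov (Aᵀ * A) (Aᵀ.mulVec b) k)
    (hxLU_min : ∀ x ∈ krylov (Aᵀ * A) (Aᵀ.mulVec b) k,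
      vnorm ((pinv D).mulVec (b - A.mulVec xLU)) ≤ vnorm ((pinv D).mulVec (b - A.mulVec x))) :
    vnorm (b - A.mulVec xQR) ≤ vnorm (b - A.mulVec xLU) ∧
      vnorm (b - A.mulVec xLU) ≤ specNorm R * specNorm R⁻¹ * vnorm (b - A.mulVec xQR) :=
  lslu_residual_bounds_general m n k A b D hD_range Q R hQR hQ hR_inv xQR xLU hxQR_mem hxQR_min
    hxLU_mem hxLU_min
end

section
/- Let A ∈ ℝ^{m×n}, let L ∈ ℝ^{n×k} have linearly independent columns with pseudoinverse L† = (LᵀL)⁻¹Lᵀ, let D ∈ ℝ^{m×(k+1)} have linearly independent columns with pseudoinverse D† = (DᵀD)⁻¹Dᵀ, let H ∈ ℝ^{(k+1)×k}, let β, λ ∈ ℝ, and suppose A L = D H and b = D (β e₁). Then for every y ∈ ℝ^k, setting x = L y, one has ‖D†(b − A x)‖₂² + λ² ‖L† x‖₂² = ‖β e₁ − H y‖₂² + λ² ‖y‖₂². Consequently, y_λ minimizes ‖β e₁ − H y‖₂² + λ²‖y‖₂² over ℝ^k if and only if x = L y_λ minimizes ‖D†(b − A x)‖₂² + λ²‖L†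 x‖₂² over x in the column space of L. -/
open Matrix

lemma pinv_mulVec_mulVec {α β : Type*} [Fintype α] [Fintype β] [DecidableEq α] [DecidableEq β]
    (M : Matrix α β ℝ) (h : LinearIndependent ℝ (fun j : β => fun i : α => M i j))
    (y : β → ℝ) : (pinv M).mulVec (M.mulVec y) = y := by
  have hMinj : Function.Injective M.mulVec := by
    rw [Matrix.mulVec_injective_iff]; exact h
  have hinj : Function.Injective (Mᵀ * M).mulVec := by
    intro u v huv
    have h0 : (Mᵀ * M).mulVec (u - v) = 0 := by simp [Matrix.mulVec_sub, huv]
    have hz : dotProduct (M.mulVec (u - v)) (M.mulVec (u - v)) = 0 := by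
      have := congrArg (dotProduct (u - v)) h0
      rwa [Matrix.dotProduct_mulVec, ← Matrix.vecMul_vecMul, Matrix.vecMul_transpose,
        ← Matrix.dotProduct_mulVec, dotProduct_zero] at this
    rw [dotProduct_self_eq_zero] at hz
    exact hMinj (by rw [← sub_eq_zero, ← Matrix.mulVec_sub]; exact hz)
  have hunit : IsUnit (Mᵀ * M) := Matrix.mulVec_injective_iff_isUnit.mp hinj
  have hinv : (Mᵀ * M)⁻¹ * (Mᵀ * M) = 1 :=
    Matrix.nonsing_inv_mul _ ((Matrix.isUnit_iff_isUnit_det _).mp hunit)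
  rw [pinv, Matrix.mulVec_mulVec, Matrix.mul_assoc, hinv, Matrix.one_mulVec]

/-- Equivalence between the Hybrid LSLU problem (3.1) and the projected Tikhonov
problem (3.2). -/
theorem hybrid_lslu_projected_problem
    (m n k : ℕ)
    (A : Matrix (Fin m) (Fin n) ℝ) (b : Fin m → ℝ)
    (L : Matrix (Fin n) (Fin k) ℝ)
    (hL_indep : LinearIndependent ℝ (fun j : Fin k => fun i : Fin n => L i j))
    (D : Matrix (Fin m) (Fin (k + 1)) ℝ)
    (hD_indep : LinearIndependent ℝ (fun j : Fin (k + 1) => fun i : Fin m => D i j))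
    (H : Matrix (Fin (k + 1)) (Fin k) ℝ) (β lam : ℝ)
    (e1 : Fin (k + 1) → ℝ) (he1 : e1 = Pi.single 0 1)
    (hAL : A * L = D * H)
    (hb : b = D.mulVec (β • e1)) :
    (∀ y : Fin k → ℝ,
      vnorm ((pinv D).mulVec (b - A.mulVec (L.mulVec y))) ^ 2 +
          lam ^ 2 * vnorm ((pinv L).mulVec (L.mulVec y)) ^ 2 =
        vnorm (β • e1 - H.mulVec y) ^ 2 + lam ^ 2 * vnorm y ^ 2) ∧
    ∀ ylam : Fin k → ℝ,
      ((∀ y : Fin k → ℝ,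
          vnorm (β • e1 - H.mulVec ylam) ^ 2 + lam ^ 2 * vnorm ylam ^ 2 ≤
            vnorm (β • e1 - H.mulVec y) ^ 2 + lam ^ 2 * vnorm y ^ 2) ↔
        (∀ x ∈ LinearMap.range L.mulVecLin,
          vnorm ((pinv D).mulVec (b - A.mulVec (L.mulVec ylam))) ^ 2 +
              lam ^ 2 * vnorm ((pinv L).mulVec (L.mulVec ylam)) ^ 2 ≤
            vnorm ((pinv D).mulVec (b - A.mulVec x)) ^ 2 +
              lam ^ 2 * vnorm ((pinv L).mulVec x) ^ 2)) := by
  have key : ∀ y : Fin k → ℝ,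
      vnorm ((pinv D).mulVec (b - A.mulVec (L.mulVec y))) ^ 2 +
          lam ^ 2 * vnorm ((pinv L).mulVec (L.mulVec y)) ^ 2 =
        vnorm (β • e1 - H.mulVec y) ^ 2 + lam ^ 2 * vnorm y ^ 2 := by
    intro y
    have h1 : b - A.mulVec (L.mulVec y) = D.mulVec (β • e1 - H.mulVec y) := by
      rw [Matrix.mulVec_sub, hb, Matrix.mulVec_mulVec, hAL, ← Matrix.mulVec_mulVec]
    rw [h1, pinv_mulVec_mulVec D hD_indep, pinv_mulVec_mulVec L hL_indep]
  refine ⟨key, fun ylam => ?_⟩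
  constructor
  · intro hmin x hx
    obtain ⟨y, rfl⟩ := hx
    rw [Matrix.mulVecLin_apply, key ylam, key y]
    exact hmin y
  · intro hmin y
    have := hmin (L.mulVec y) ⟨y, rfl⟩
    rwa [key ylam, key y] at this
end
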